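/- Define a family of marked trees M_k inductively: M_1 contains the single rooted one-edge tree with root marked 0 and its child marked 1; and M_k is obtained from M_{k−1} by, for each marked tree, either (i) adding a new 1-marked child to the root, or (ii) re-rooting at a 1-marked neighbor u of the root, setting u's mark to 0, and attaching a new 1-marked leaf to u (removing duplicates up to isomorphism). Then for every k ≥ 1, |M_k| = 2^{k−1}. -/

import Mathlib

/-- A finite rooted tree with vertices marked by `Bool` (`true` = mark 1, `false` = mark 0);
the top node is the root. -/
inductive RTree where
  | node (mark : Bool) (children : List RTree)

namespace RTree

mutual
  /-- Root-preserving, mark-preserving isomorphism of marked rooted trees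
  (children are identified up to permutation). -/
  inductive Iso : RTree → RTree → Prop where
    | node {m : Bool} {cs cs' cs'' : List RTree} :
        List.Perm cs' cs'' → IsoList cs cs'' → Iso (.node m cs) (.node m cs')
  /-- Pointwise isomorphism of lists of marked trees. -/
  inductive IsoList : List RTree → List RTree → Prop where
    | nil : IsoList [] []
    | cons {t t' : RTree} {l l' : List RTree} :
        Iso t t' → IsoList l l' → IsoList (t :: l) (t' :: l')
end

/-- Membership in the inductively defined family `M_k` of marked trees: `M_1` is the one-edge
tree with `0`-marked root and `1`-marked child; `M_{k+1}` is obtained from `M_k` by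
(i) adding a new `1`-marked child to the root, or (ii) re-rooting at a `1`-marked neighbor `u`
of the root, setting `u`'s mark to `0`, and attaching a new `1`-marked leaf to `u`. -/
inductive Mem : ℕ → RTree → Prop where
  | base : Mem 1 (.node false [.node true []])
  | op1 {k : ℕ} {m : Bool} {cs : List RTree} :
      Mem k (.node m cs) → Mem (k + 1) (.node m (.node true [] :: cs))
  | op2 {k : ℕ} {m : Bool} {l1 l2 cs' : List RTree} :
      Mem k (.node m (l1 ++ .node true cs' :: l2)) →
      Mem (k + 1) (.node false (.node true [] :: (cs' ++ [.node m (l1 ++ l2)])))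

end RTree

/-!
Every tree of `M_k` is a caterpillar: a path of `0`-marked vertices hanging down from the root,
each carrying some `1`-marked leaves. The number of leaves at the root, followed by the number of
leaves plus one (for the edge into it) of each further path vertex, is a composition of the
number `k` of edges, and it is a complete isomorphism invariant. Operation (i) increments the
first part, operation (ii) prepends a part `1`, so every composition of `k` is reached, and the
isomorphism classes are counted by the `2 ^ (k - 1)` compositions of `k`.
-/

theorem Nat.card_quot_eq_of_surjective {α β : Type*} {r : α → α → Prop} (f : α → β)
    (hf : Function.Surjective f) (hr : ∀ a b, r a b ↔ f a = f b) :
    Nat.card (Quot r) = Nat.card β :=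
  Nat.card_eq_of_bijective (Quot.lift f fun a b => (hr a b).1)
    ⟨fun x y => Quot.induction_on₂ x y fun a b h => Quot.sound ((hr a b).2 h),
      (Quot.surjective_lift _).2 hf⟩

namespace RTree

mutual
theorem Iso.refl : (t : RTree) → Iso t t
  | .node _ cs => .node (List.Perm.refl cs) (IsoList.refl cs)

theorem IsoList.refl : (l : List RTree) → IsoList l l
  | [] => .nil
  | t :: l => .cons (Iso.refl t) (IsoList.refl l)
end

theorem isoList_iff_forall₂ {l l' : List RTree} : IsoList l l' ↔ List.Forall₂ Iso l l' := by
  constructor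
  · intro h
    induction l generalizing l' with
    | nil => cases h; exact .nil
    | cons t l ih => cases h with | cons ht hl => exact .cons ht (ih hl)
  · intro h
    induction h with
    | nil => exact .nil
    | cons ht _ ih => exact .cons ht ih

theorem iso_node_of_perm_of_forall₂ {m : Bool} {cs cs' P Q : List RTree} (hP : cs.Perm P)
    (hQ : cs'.Perm Q) (hPQ : List.Forall₂ Iso P Q) : Iso (.node m cs) (.node m cs') := by
  obtain ⟨d, hcsd, hdQ⟩ := List.perm_comp_forall₂ hP hPQ
  exact .node (hQ.trans hdQ.symm) (isoList_iff_forall₂.2 hcsd)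

theorem Iso.exists_perm_forall₂ {m : Bool} {cs P : List RTree} {t : RTree}
    (h : Iso (.node m cs) t) (hP : cs.Perm P) :
    ∃ cs' Q, t = .node m cs' ∧ cs'.Perm Q ∧ List.Forall₂ Iso P Q := by
  obtain @⟨_, _, cs', cs'', hcs', hiso⟩ := h
  obtain ⟨Q, hPQ, hQ⟩ := List.perm_comp_forall₂ hP.symm (isoList_iff_forall₂.1 hiso)
  exact ⟨cs', Q, rfl, hcs'.trans hQ.symm, hPQ⟩

def markedLeaf : RTree := .node true []

theorem Iso.eq_markedLeaf {t : RTree} (h : Iso markedLeaf t) : t = markedLeaf := by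
  obtain ⟨hp, hl⟩ := h
  cases hl
  rw [hp.eq_nil]
  rfl

theorem eq_replicate_of_forall₂_iso {a : ℕ} {d : List RTree}
    (h : List.Forall₂ Iso (List.replicate a markedLeaf) d) : d = List.replicate a markedLeaf := by
  induction a generalizing d with
  | zero => exact List.forall₂_nil_left_iff.1 h
  | succ a ih =>
    rw [List.replicate_succ] at h
    obtain _ | ⟨hx, hd⟩ := h
    rw [hx.eq_markedLeaf, ih hd, List.replicate_succ]

/-- `IsCaterpillar t (a :: l)`: the root of `t` has `a` children that are `1`-marked leaves and,
when `l ≠ []`, one more child `u`, and `l` is the profile of `u` with its first entry raised by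
one to account for the edge into `u`. So the entries sum to the number of edges. -/
inductive IsCaterpillar : RTree → List ℕ → Prop
  | leaf {cs : List RTree} {a : ℕ} :
      cs.Perm (List.replicate a markedLeaf) → IsCaterpillar (.node false cs) [a]
  | cons {cs : List RTree} {a b : ℕ} {t : RTree} {l : List ℕ} :
      cs.Perm (t :: List.replicate a markedLeaf) → IsCaterpillar t (b :: l) →
      IsCaterpillar (.node false cs) (a :: (b + 1) :: l)

namespace IsCaterpillar

variable {t t' : RTree} {m : Bool} {cs : List RTree} {a : ℕ} {l c c' : List ℕ}

theorem exists_eq_node_false (h : IsCaterpillar t c) : ∃ cs, t = .node false cs := by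
  cases h <;> exact ⟨_, rfl⟩

theorem ne_markedLeaf (h : IsCaterpillar t c) : t ≠ markedLeaf := by
  obtain ⟨cs, rfl⟩ := h.exists_eq_node_false
  simp [markedLeaf]

theorem exists_eq_cons (h : IsCaterpillar t c) : ∃ a l, c = a :: l := by
  cases h <;> exact ⟨_, _, rfl⟩

theorem perm {cs' : List RTree} (h : IsCaterpillar (.node m cs) c) (hp : cs'.Perm cs) :
    IsCaterpillar (.node m cs') c := by
  cases h with
  | leaf hcs => exact .leaf (hp.trans hcs)
  | cons hcs ht => exact .cons (hp.trans hcs) ht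

theorem of_iso (h : IsCaterpillar t c) (hiso : Iso t t') : IsCaterpillar t' c := by
  induction h generalizing t' with
  | leaf hcs =>
    obtain ⟨cs', Q, rfl, hQ, hPQ⟩ := hiso.exists_perm_forall₂ hcs
    exact .leaf (eq_replicate_of_forall₂_iso hPQ ▸ hQ)
  | cons hcs _ ih =>
    obtain ⟨cs', Q, rfl, hQ, hPQ⟩ := hiso.exists_perm_forall₂ hcs
    obtain _ | ⟨hu, hrep⟩ := hPQ
    exact .cons (eq_replicate_of_forall₂_iso hrep ▸ hQ) (ih hu)

theorem iso (h : IsCaterpillar t c) (h' : IsCaterpillar t' c) : Iso t t' := by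
  induction h generalizing t' with
  | leaf hcs =>
    cases h' with
    | leaf hcs' =>
      exact iso_node_of_perm_of_forall₂ hcs hcs' (List.forall₂_same.2 fun u _ => Iso.refl u)
  | cons hcs _ ih =>
    cases h' with
    | cons hcs' hu' =>
      exact iso_node_of_perm_of_forall₂ hcs hcs'
        (.cons (ih hu') (List.forall₂_same.2 fun u _ => Iso.refl u))

theorem unique (h : IsCaterpillar t c) (h' : IsCaterpillar t c') : c = c' := by
  induction h generalizing c' with
  | leaf hcs =>
    cases h' with
    | leaf hcs' => simpa using (hcs.symm.trans hcs').length_eq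
    | cons hcs' hu =>
      have hmem := hcs.subset (hcs'.symm.subset List.mem_cons_self)
      exact absurd (List.eq_of_mem_replicate hmem) hu.ne_markedLeaf
  | cons hcs hu ih =>
    cases h' with
    | leaf hcs' =>
      have hmem := hcs'.subset (hcs.symm.subset List.mem_cons_self)
      exact absurd (List.eq_of_mem_replicate hmem) hu.ne_markedLeaf
    | @cons _ _ _ u' _ hcs' hu' =>
      have hperm := hcs.symm.trans hcs'
      obtain rfl : u' = _ := by
        rcases List.mem_cons.1 (hperm.symm.subset List.mem_cons_self) with h | h
        · exact h
        · exact absurd (List.eq_of_mem_replicate h) hu'.ne_markedLeaf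
      have ha := hperm.length_eq
      simp only [List.length_cons, List.length_replicate, Nat.add_right_cancel_iff] at ha
      cases ih hu'
      rw [ha]

theorem cons_markedLeaf (h : IsCaterpillar (.node m cs) (a :: l)) :
    IsCaterpillar (.node m (markedLeaf :: cs)) ((a + 1) :: l) := by
  cases h with
  | leaf hcs => exact .leaf (List.replicate_succ .. ▸ hcs.cons _)
  | cons hcs ht => exact .cons ((hcs.cons _).trans (.swap _ _ _)) ht

theorem markedLeaf_mem (h : IsCaterpillar (.node m cs) ((a + 1) :: l)) : markedLeaf ∈ cs := by
  cases h with
  | leaf hcs => exact hcs.symm.subset (by simp)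
  | cons hcs _ => exact hcs.symm.subset (by simp)

theorem of_cons {cs' : List RTree} (h : IsCaterpillar (.node m (.node true cs' :: cs)) (a :: l)) :
    cs' = [] ∧ ∃ a', a = a' + 1 ∧ IsCaterpillar (.node m cs) (a' :: l) := by
  have hleaf : ∀ {a : ℕ}, RTree.node true cs' ∈ List.replicate a markedLeaf →
      cs' = [] ∧ ∃ a', a = a' + 1 := by
    intro a hmem
    obtain ⟨ha, hcs'⟩ := List.mem_replicate.1 hmem
    exact ⟨by simpa [markedLeaf] using hcs', Nat.exists_eq_succ_of_ne_zero ha⟩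
  cases h with
  | leaf hcs =>
    obtain ⟨rfl, a', rfl⟩ := hleaf (hcs.subset List.mem_cons_self)
    rw [List.replicate_succ] at hcs
    exact ⟨rfl, a', rfl, .leaf hcs.cons_inv⟩
  | cons hcs ht =>
    have hmem := List.mem_cons.1 (hcs.subset List.mem_cons_self)
    obtain ⟨rfl, a', rfl⟩ := hleaf (hmem.resolve_left fun h => by
      simpa [← h] using ht.exists_eq_node_false)
    rw [List.replicate_succ] at hcs
    exact ⟨rfl, a', rfl, .cons (hcs.trans (.swap _ _ _)).cons_inv ht⟩

end IsCaterpillar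

theorem Mem.exists_isCaterpillar {k : ℕ} {t : RTree} (h : Mem k t) :
    ∃ c : Composition k, IsCaterpillar t c.blocks := by
  induction h with
  | base => exact ⟨⟨[1], by simp, rfl⟩, .leaf (.refl _)⟩
  | op1 _ ih =>
    obtain ⟨⟨_, hpos, hsum⟩, hc⟩ := ih
    obtain ⟨a, l, rfl⟩ := hc.exists_eq_cons
    refine ⟨⟨(a + 1) :: l, fun hi => ?_, by simp only [List.sum_cons] at hsum ⊢; omega⟩,
      hc.cons_markedLeaf⟩
    rcases List.mem_cons.1 hi with rfl | hi
    exacts [a.succ_pos, hpos (List.mem_cons_of_mem _ hi)]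
  | op2 _ ih =>
    obtain ⟨⟨_, hpos, hsum⟩, hc⟩ := ih
    obtain ⟨a, l, rfl⟩ := hc.exists_eq_cons
    obtain ⟨rfl, a', rfl, hc'⟩ := (hc.perm List.perm_middle.symm).of_cons
    refine ⟨⟨1 :: (a' + 1) :: l, fun hi => ?_, by simp only [List.sum_cons] at hsum ⊢; omega⟩,
      .cons (.swap _ _ _) hc'⟩
    rcases List.mem_cons.1 hi with rfl | hi
    exacts [Nat.one_pos, hpos hi]

theorem exists_mem_isCaterpillar_add_leaves {k a : ℕ} {l : List ℕ}
    (h : ∃ t, Mem k t ∧ IsCaterpillar t (a :: l)) (n : ℕ) :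
    ∃ t, Mem (k + n) t ∧ IsCaterpillar t ((n + a) :: l) := by
  induction n with
  | zero => simpa using h
  | succ n ih =>
    obtain ⟨⟨m, cs⟩, ht, hc⟩ := ih
    exact ⟨_, ht.op1, n.succ_add a ▸ hc.cons_markedLeaf⟩

theorem exists_mem_isCaterpillar_one_cons {l : List ℕ} (hl : ∀ x ∈ l, 0 < x) :
    ∃ t, Mem (1 + l.sum) t ∧ IsCaterpillar t (1 :: l) := by
  induction l with
  | nil => exact ⟨_, .base, .leaf (.refl _)⟩
  | cons b l ih =>
    obtain ⟨b, rfl⟩ := Nat.exists_eq_succ_of_ne_zero (hl _ List.mem_cons_self).ne'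
    obtain ⟨⟨m, cs⟩, ht, hc⟩ :=
      exists_mem_isCaterpillar_add_leaves (ih fun x hx => hl x (List.mem_cons_of_mem _ hx)) b
    obtain ⟨l1, l2, rfl⟩ := List.append_of_mem hc.markedLeaf_mem
    obtain ⟨-, _, hb, hc'⟩ := (hc.perm List.perm_middle.symm).of_cons
    obtain rfl := Nat.succ_injective hb
    have hk : 1 + l.sum + b + 1 = 1 + (b.succ :: l).sum := by simp only [List.sum_cons]; omega
    exact ⟨_, hk ▸ ht.op2 (cs' := []), .cons (.swap _ _ _) hc'⟩

theorem exists_mem_isCaterpillar {k : ℕ} (hk : 0 < k) (c : Composition k) :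
    ∃ t, Mem k t ∧ IsCaterpillar t c.blocks := by
  obtain ⟨blocks, hpos, hsum⟩ := c
  obtain _ | ⟨a, l⟩ := blocks
  · simp only [List.sum_nil] at hsum; omega
  obtain ⟨a, rfl⟩ := Nat.exists_eq_succ_of_ne_zero (hpos List.mem_cons_self).ne'
  have hk : 1 + l.sum + a = k := by simp only [List.sum_cons] at hsum; omega
  exact hk ▸ exists_mem_isCaterpillar_add_leaves
    (exists_mem_isCaterpillar_one_cons fun x hx => hpos (List.mem_cons_of_mem _ hx)) a

end RTree

/-- Counting the members of `M_k` up to isomorphism: `|M_k| = 2^{k-1}`. -/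
theorem card_marked_trees (k : ℕ) (hk : 1 ≤ k) :
    Nat.card (Quot fun a b : {t : RTree // RTree.Mem k t} => RTree.Iso a.1 b.1)
      = 2 ^ (k - 1) := by
  choose f hf using fun t : {t // RTree.Mem k t} => t.2.exists_isCaterpillar
  rw [Nat.card_quot_eq_of_surjective f ?_ ?_, Nat.card_eq_fintype_card, composition_card]
  · intro c
    obtain ⟨t, ht, hc⟩ := RTree.exists_mem_isCaterpillar hk c
    exact ⟨⟨t, ht⟩, Composition.ext ((hf _).unique hc)⟩
  · exact fun a b => ⟨fun h => Composition.ext (((hf a).of_iso h).unique (hf b)),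
      fun h => (hf a).iso (h ▸ hf b)⟩
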